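/- arXiv:2309.13799 — 2 statements merged into one kernel-verified Lean document; each statement's English description precedes it below -/
import Mathlib

section
/- Let N, n be natural numbers and w : Fin N → Bool a world of weight n (the cardinality of {j | w j = true} is n). Let a : Fin N with w a = true. Then for every world v : Fin N → Bool with weight at least n that agrees with w at every coordinate j ≠ a, one has v a = true. (Muddy agents know they are muddy once all worlds of weight less than n have been eliminated by the father's questions.) -/
/-- The weight of a world: number of muddy agents. -/
def weight {N : ℕ} (v : Fin N → Bool) : ℕ :=
  (Finset.univ.filter (fun j => v j = true)).card

theorem stmt_1 (N n : ℕ) (w : Fin N → Bool) (hw : weight w = n)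
    (a : Fin N) (ha : w a = true) :
    ∀ v : Fin N → Bool, n ≤ weight v → (∀ j : Fin N, j ≠ a → v j = w j) →
      v a = true := by
  intro v hn hagree
  by_contra hva
  have hva' : v a = false := by simpa using hva
  have hset : (Finset.univ.filter (fun j => v j = true))
      = (Finset.univ.filter (fun j => w j = true)).erase a := by
    ext j
    simp only [Finset.mem_filter, Finset.mem_erase, Finset.mem_univ, true_and]
    constructor
    · intro h
      have hja : j ≠ a := by rintro rfl; rw [hva'] at h; exact Bool.noConfusion h
      exact ⟨hja, (hagree j hja) ▸ h⟩
    · rintro ⟨hja, h⟩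
      rw [hagree j hja]; exact h
  have hmem : a ∈ Finset.univ.filter (fun j => w j = true) := by
    simp [ha]
  have hcard : weight v = n - 1 := by
    unfold weight at *
    rw [hset, Finset.card_erase_of_mem hmem, hw]
  have hpos : 1 ≤ n := by
    rw [← hw]
    exact Finset.card_pos.mpr ⟨a, hmem⟩
  omega
end

section
/- Let N, n be natural numbers and v : Fin N → Bool a world of weight at least n. Then the following are equivalent: (1) the weight of v equals n; (2) for every coordinate b with v b = true and every world v' of weight at least n that agrees with v at every coordinate j ≠ b, one has v' b = true. (In the model surviving after n questions, all muddy agents of a world know they are muddy exactly at the worlds of weight exactly n.) -/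
lemma weight_aux {N : ℕ} (v v' : Fin N → Bool) (b : Fin N) (hb : v b = true)
    (hb' : v' b = false) (h : ∀ j : Fin N, j ≠ b → v' j = v j) :
    weight v' + 1 = weight v := by
  have hset : (Finset.univ.filter (fun j => v' j = true)) =
      (Finset.univ.filter (fun j => v j = true)).erase b := by
    ext j
    simp only [Finset.mem_filter, Finset.mem_erase, Finset.mem_univ, true_and]
    constructor
    · intro hj
      rcases eq_or_ne j b with rfl | hne
      · simp [hb'] at hj
      · exact ⟨hne, (h j hne) ▸ hj⟩
    · rintro ⟨hne, hj⟩
      rw [h j hne]; exact hj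
  unfold weight
  rw [hset, Finset.card_erase_of_mem (by simp [hb])]
  have : 0 < (Finset.univ.filter (fun j => v j = true)).card :=
    Finset.card_pos.mpr ⟨b, by simp [hb]⟩
  omega

theorem stmt_3 (N n : ℕ) (v : Fin N → Bool) (hv : n ≤ weight v) :
    weight v = n ↔
      ∀ b : Fin N, v b = true →
        ∀ v' : Fin N → Bool, n ≤ weight v' →
          (∀ j : Fin N, j ≠ b → v' j = v j) → v' b = true := by
  constructor
  · intro hw b hb v' hv' hagree
    by_contra hfalse
    have hb' : v' b = false := by simpa using hfalse
    have := weight_aux v v' b hb hb' hagree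
    omega
  · intro h
    by_contra hne
    have hgt : n < weight v := lt_of_le_of_ne hv (Ne.symm hne)
    have hpos : 0 < weight v := by omega
    obtain ⟨b, hb⟩ : ∃ b, v b = true := by
      by_contra hall
      push_neg at hall
      have : weight v = 0 := by
        unfold weight
        rw [Finset.filter_eq_empty_iff.mpr (by intro j _; exact hall j), Finset.card_empty]
      omega
    set v' := Function.update v b false with hv'def
    have hb' : v' b = false := by simp [hv'def]
    have hagree : ∀ j : Fin N, j ≠ b → v' j = v j := by
      intro j hj; simp [hv'def, Function.update_of_ne hj]
    have hwa := weight_aux v v' b hb hb' hagree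
    have := h b hb v' (by omega) hagree
    rw [hb'] at this
    exact Bool.false_ne_true this
end
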